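/- arXiv:1908.07554 — 2 statements merged into one kernel-verified Lean document; each statement's English description precedes it below -/
import Mathlib

section
/- Let a, b ∈ {1,...,k}^ℤ and (l_M) a sequence of positive integers tending to infinity. If for every M the set W_M(b) of aligned l_M-blocks of b satisfies #W_M(b) ≤ #B_{l_M}(a), then h(b) ≤ 2 h(a), where h denotes the entropy lim_n (1/n) log #B_n(·). -/
open Filter Topology

/-- The set of `n`-blocks (words of length `n`) occurring in the two-sided sequence `q`. -/
def blocks (q : ℤ → ℤ) (n : ℕ) : Set (Fin n → ℤ) :=
  {w | ∃ s : ℤ, ∀ i : Fin n, w i = q (s + ((i : ℕ) : ℤ))}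

/-- The set of aligned `L`-blocks of `q`, i.e. blocks occurring at positions `r*L`, `r ∈ ℤ`. -/
def alignedBlocks (q : ℤ → ℤ) (L : ℕ) : Set (Fin L → ℤ) :=
  {w | ∃ r : ℤ, ∀ i : Fin L, w i = q (r * (L : ℤ) + ((i : ℕ) : ℤ))}

/-- The entropy of a sequence: `lim (1/n) log #B_n(q)` (written as a `limsup`). -/
noncomputable def seqEntropy (q : ℤ → ℤ) : ℝ :=
  limsup (fun n : ℕ => Real.log (Nat.card (blocks q n)) / n) atTop

/-- `b` is a Toeplitz sequence: every coordinate repeats along an arithmetic progression. -/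
def IsToeplitz (b : ℤ → ℤ) : Prop :=
  ∀ n : ℤ, ∃ l : ℕ, 1 ≤ l ∧ ∀ r : ℤ, b (n + r * (l : ℤ)) = b n

/-- The average distance of `a` and `b` over the symmetric window `[-N, N]`. -/
noncomputable def avgDist (a b : ℤ → ℤ) (N : ℕ) : ℝ :=
  (∑ n ∈ Finset.Icc (-(N : ℤ)) (N : ℤ), ((|a n - b n| : ℤ) : ℝ)) / (2 * N + 1)

/-!
An `L`-block of `b` starting at `rL + t` with `0 ≤ t < L` is read off from `t` and the two
aligned blocks at `rL` and `(r+1)L`, so `#B_L(b) ≤ L · #W_L(b)² ≤ L · #B_L(a)²`. By Fekete's lemma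
`h(b) ≤ log #B_L(b) / L` for every `L`, hence `h(b) ≤ log L / L + 2 log #B_L(a) / L`; along
`L = l_M → ∞` the right-hand side tends to `2 h(a)`.
-/

open Real

lemma Fin.append_consecutive_windows (q : ℤ → ℤ) (s : ℤ) (m n : ℕ) :
    Fin.append (fun i : Fin m => q (s + (i : ℕ))) (fun j : Fin n => q (s + m + (j : ℕ))) =
      fun i : Fin (m + n) => q (s + (i : ℕ)) := by
  funext i
  refine Fin.addCases (fun i => ?_) (fun j => ?_) i
  · simp
  · simp only [Fin.append_right, Fin.val_natAdd]
    push_cast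
    ring_nf

section Blocks

variable {q : ℤ → ℤ}

lemma blocks_finite (hq : (Set.range q).Finite) (n : ℕ) : (blocks q n).Finite :=
  (Set.Finite.pi' fun _ : Fin n => hq).subset fun _ ⟨_, hs⟩ i => ⟨_, (hs i).symm⟩

lemma blocks_nonempty (q : ℤ → ℤ) (n : ℕ) : (blocks q n).Nonempty :=
  ⟨fun i => q (0 + (i : ℕ)), 0, fun _ => rfl⟩

lemma alignedBlocks_subset_blocks (q : ℤ → ℤ) (L : ℕ) : alignedBlocks q L ⊆ blocks q L :=
  fun _ ⟨r, hr⟩ => ⟨r * L, hr⟩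

lemma card_blocks_pos (hq : (Set.range q).Finite) (n : ℕ) : 0 < Nat.card (blocks q n) := by
  rw [Nat.card_coe_set_eq, Set.ncard_pos (blocks_finite hq n)]
  exact blocks_nonempty q n

lemma card_alignedBlocks_pos (hq : (Set.range q).Finite) (L : ℕ) :
    0 < Nat.card (alignedBlocks q L) := by
  rw [Nat.card_coe_set_eq,
    Set.ncard_pos ((blocks_finite hq L).subset (alignedBlocks_subset_blocks q L))]
  exact ⟨fun i => q (0 * L + (i : ℕ)), 0, fun _ => rfl⟩

lemma card_blocks_add_le (hq : (Set.range q).Finite) (m n : ℕ) :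
    Nat.card (blocks q (m + n)) ≤ Nat.card (blocks q m) * Nat.card (blocks q n) := by
  have hsub : blocks q (m + n) ⊆
      (fun p => Fin.append p.1 p.2) '' (blocks q m ×ˢ blocks q n) := by
    rintro w ⟨s, hs⟩
    refine ⟨(_, _), ⟨⟨s, fun _ => rfl⟩, ⟨s + m, fun _ => rfl⟩⟩, ?_⟩
    exact (Fin.append_consecutive_windows q s m n).trans (funext fun i => (hs i).symm)
  have hfin := (blocks_finite hq m).prod (blocks_finite hq n)
  simp only [Nat.card_coe_set_eq, ← Set.ncard_prod]
  exact (Set.ncard_le_ncard hsub (hfin.image _)).trans (Set.ncard_image_le hfin)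

lemma card_blocks_le_mul_card_alignedBlocks_sq (hq : (Set.range q).Finite) {L : ℕ} (hL : L ≠ 0) :
    Nat.card (blocks q L) ≤ L * Nat.card (alignedBlocks q L) ^ 2 := by
  have hW := (blocks_finite hq L).subset (alignedBlocks_subset_blocks q L)
  let window : Fin L × (Fin L → ℤ) × (Fin L → ℤ) → Fin L → ℤ := fun p i =>
    Fin.append p.2.1 p.2.2 ⟨p.1 + i, Nat.add_lt_add p.1.2 i.2⟩
  have hsub : blocks q L ⊆ window '' (Set.univ ×ˢ alignedBlocks q L ×ˢ alignedBlocks q L) := by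
    rintro w ⟨s, hs⟩
    have hLz : (0 : ℤ) < L := by omega
    have ht : (s % L).toNat < L := by have := Int.emod_lt_of_pos s hLz; omega
    refine ⟨(⟨_, ht⟩, _, _), ⟨trivial, ⟨s / L, fun _ => rfl⟩, ⟨s / L + 1, fun _ => rfl⟩⟩, ?_⟩
    funext i
    have hsplit := Int.ediv_mul_add_emod s L
    have hmod := Int.toNat_of_nonneg (Int.emod_nonneg s hLz.ne')
    simp only [window, add_mul, one_mul, Fin.append_consecutive_windows q (s / L * L) L L, hs i]
    congr 1
    push_cast
    omega
  have hfin := (Set.finite_univ (α := Fin L)).prod (hW.prod hW)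
  simp only [Nat.card_coe_set_eq]
  calc (blocks q L).ncard
      ≤ (Set.univ ×ˢ alignedBlocks q L ×ˢ alignedBlocks q L).ncard :=
        (Set.ncard_le_ncard hsub (hfin.image _)).trans (Set.ncard_image_le hfin)
    _ = L * (alignedBlocks q L).ncard ^ 2 := by simp [Set.ncard_prod, sq]

lemma subadditive_log_card_blocks (hq : (Set.range q).Finite) :
    Subadditive fun n => log (Nat.card (blocks q n)) := fun m n => by
  have hpos := card_blocks_pos hq
  calc log (Nat.card (blocks q (m + n)))
      ≤ log ((Nat.card (blocks q m) : ℝ) * Nat.card (blocks q n)) :=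
        log_le_log (by exact_mod_cast hpos _) (by exact_mod_cast card_blocks_add_le hq m n)
    _ = _ := log_mul (by exact_mod_cast (hpos m).ne') (by exact_mod_cast (hpos n).ne')

lemma bddBelow_log_card_blocks_div (hq : (Set.range q).Finite) :
    BddBelow (Set.range fun n : ℕ => log (Nat.card (blocks q n)) / n) :=
  ⟨0, by
    rintro _ ⟨n, rfl⟩
    exact div_nonneg (log_nonneg (by exact_mod_cast card_blocks_pos hq n)) n.cast_nonneg⟩

lemma seqEntropy_eq_lim (hq : (Set.range q).Finite) :
    seqEntropy q = (subadditive_log_card_blocks hq).lim :=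
  ((subadditive_log_card_blocks hq).tendsto_lim (bddBelow_log_card_blocks_div hq)).limsup_eq

lemma tendsto_log_card_blocks_div (hq : (Set.range q).Finite) :
    Tendsto (fun n : ℕ => log (Nat.card (blocks q n)) / n) atTop (𝓝 (seqEntropy q)) :=
  seqEntropy_eq_lim hq ▸
    (subadditive_log_card_blocks hq).tendsto_lim (bddBelow_log_card_blocks_div hq)

lemma seqEntropy_le_log_card_blocks_div (hq : (Set.range q).Finite) {n : ℕ} (hn : n ≠ 0) :
    seqEntropy q ≤ log (Nat.card (blocks q n)) / n :=
  seqEntropy_eq_lim hq ▸ (subadditive_log_card_blocks hq).lim_le_div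
    (bddBelow_log_card_blocks_div hq) hn

lemma seqEntropy_le_log_card_alignedBlocks_div (hq : (Set.range q).Finite) {L : ℕ}
    (hL : L ≠ 0) :
    seqEntropy q ≤ log L / L + 2 * (log (Nat.card (alignedBlocks q L)) / L) := by
  have hW : (0 : ℝ) < Nat.card (alignedBlocks q L) := by
    exact_mod_cast card_alignedBlocks_pos hq L
  calc seqEntropy q ≤ log (Nat.card (blocks q L)) / L := seqEntropy_le_log_card_blocks_div hq hL
    _ ≤ log ((L : ℝ) * Nat.card (alignedBlocks q L) ^ 2) / L := by
        gcongr
        · exact_mod_cast card_blocks_pos hq L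
        · exact_mod_cast card_blocks_le_mul_card_alignedBlocks_sq hq hL
    _ = _ := by
        rw [log_mul (by exact_mod_cast hL) (by positivity), log_pow]
        ring

end Blocks

theorem entropy_le_of_aligned_card_general (k : ℕ) (a b : ℤ → ℤ)
    (ha : ∀ n, a n ∈ Set.Icc (1 : ℤ) (k : ℤ)) (hb : ∀ n, b n ∈ Set.Icc (1 : ℤ) (k : ℤ))
    (l : ℕ → ℕ) (hlim : Tendsto l atTop atTop)
    (hcard : ∀ M, Nat.card (alignedBlocks b (l M)) ≤ Nat.card (blocks a (l M))) :
    seqEntropy b ≤ 2 * seqEntropy a := by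
  have ha' : (Set.range a).Finite := (Set.finite_Icc 1 (k : ℤ)).subset (Set.range_subset_iff.2 ha)
  have hb' : (Set.range b).Finite := (Set.finite_Icc 1 (k : ℤ)).subset (Set.range_subset_iff.2 hb)
  have hlog : Tendsto (fun M => log (l M) / l M) atTop (𝓝 0) :=
    isLittleO_log_id_atTop.tendsto_div_nhds_zero.comp (tendsto_natCast_atTop_atTop.comp hlim)
  have hbound := hlog.add (((tendsto_log_card_blocks_div ha').comp hlim).const_mul 2)
  rw [zero_add] at hbound
  refine ge_of_tendsto hbound ?_
  filter_upwards [hlim.eventually_ne_atTop 0] with M hM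
  calc seqEntropy b ≤ log (l M) / l M + 2 * (log (Nat.card (alignedBlocks b (l M))) / l M) :=
        seqEntropy_le_log_card_alignedBlocks_div hb' hM
    _ ≤ log (l M) / l M + 2 * (log (Nat.card (blocks a (l M))) / l M) := by
        gcongr
        · exact_mod_cast card_alignedBlocks_pos hb' _
        · exact_mod_cast hcard M

/-- If along scales l_M → ∞ the number of aligned blocks of b is at most the number of
blocks of a, then h(b) ≤ 2 h(a). -/
theorem entropy_le_of_aligned_card (k : ℕ) (hk : 1 ≤ k) (a b : ℤ → ℤ)
    (ha : ∀ n, a n ∈ Set.Icc (1 : ℤ) (k : ℤ)) (hb : ∀ n, b n ∈ Set.Icc (1 : ℤ) (k : ℤ))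
    (l : ℕ → ℕ) (hl : ∀ M, 1 ≤ l M) (hlim : Tendsto l atTop atTop)
    (hcard : ∀ M, Nat.card (alignedBlocks b (l M)) ≤ Nat.card (blocks a (l M))) :
    seqEntropy b ≤ 2 * seqEntropy a :=
  entropy_le_of_aligned_card_general k a b ha hb l hlim hcard
end

section
/- Let a ∈ {1,...,k}^ℤ, let l divide L, and define a' by replacing the blocks of a at positions [rL - l, rL + l -1] (all r ∈ ℤ) by the fixed word a[-l, l-1], keeping a elsewhere. Then there is a surjection from the set of aligned L-blocks of a, {a[rL, (r+1)L - 1] : r ∈ ℤ}, onto the set of aligned L-blocks of a', {a'[rL, (r+1)L - 1] : r ∈ ℤ}; in particular #{a'[rL, (r+1)L - 1] : r ∈ ℤ} ≤ #{a[rL, (r+1)L - 1] : r ∈ ℤ}. -/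
open Filter Topology

/-- The modification map on words induced by the boundary modification. -/
noncomputable def modifyWord (a : ℤ → ℤ) (l L : ℕ) (w : Fin L → ℤ) : Fin L → ℤ :=
  fun i => if (i : ℕ) < l then a i
    else if L - l ≤ (i : ℕ) then a ((i : ℕ) - (L : ℤ)) else w i

lemma modifyWord_key (a a' : ℤ → ℤ) (l L : ℕ) (hl : 1 ≤ l)
    (h1 : ∀ r n : ℤ, r * (L : ℤ) - l ≤ n → n ≤ r * (L : ℤ) + l - 1 → a' n = a (n - r * L))
    (h2 : ∀ n : ℤ, (∀ r : ℤ, n < r * (L : ℤ) - l ∨ r * (L : ℤ) + l - 1 < n) → a' n = a n)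
    (r : ℤ) (w : Fin L → ℤ) (hw : ∀ i : Fin L, w i = a (r * (L : ℤ) + ((i : ℕ) : ℤ))) :
    ∀ i : Fin L, modifyWord a l L w i = a' (r * (L : ℤ) + ((i : ℕ) : ℤ)) := by
  intro i
  have hiL : (i : ℕ) < L := i.2
  unfold modifyWord
  by_cases hc1 : (i : ℕ) < l
  · rw [if_pos hc1, h1 r (r * (L : ℤ) + ((i : ℕ) : ℤ))]
    · ring_nf
    · have : (0 : ℤ) ≤ ((i : ℕ) : ℤ) := Int.natCast_nonneg _
      have hl' : (1 : ℤ) ≤ (l : ℤ) := by exact_mod_cast hl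
      linarith
    · have : ((i : ℕ) : ℤ) ≤ (l : ℤ) - 1 := by
        have : ((i : ℕ) : ℤ) < (l : ℤ) := by exact_mod_cast hc1
        omega
      linarith
  · rw [if_neg hc1]
    by_cases hc2 : L - l ≤ (i : ℕ)
    · rw [if_pos hc2, h1 (r + 1) (r * (L : ℤ) + ((i : ℕ) : ℤ))]
      · ring_nf
      · have : (L : ℤ) - l ≤ ((i : ℕ) : ℤ) := by
          have h1' : ((L - l : ℕ) : ℤ) ≤ ((i : ℕ) : ℤ) := by exact_mod_cast hc2
          omega
        have : (r + 1) * (L : ℤ) - l = r * L + ((L : ℤ) - l) := by ring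
        linarith
      · have : ((i : ℕ) : ℤ) < (L : ℤ) := by exact_mod_cast hiL
        have hl' : (1 : ℤ) ≤ (l : ℤ) := by exact_mod_cast hl
        have : (r + 1) * (L : ℤ) + l - 1 = r * L + ((L : ℤ) + l - 1) := by ring
        linarith
    · rw [if_neg hc2, hw i]
      rw [h2]
      intro s
      have hli : (l : ℤ) ≤ ((i : ℕ) : ℤ) := by
        have : l ≤ (i : ℕ) := Nat.le_of_not_lt hc1
        exact_mod_cast this
      have hiLl : ((i : ℕ) : ℤ) < (L : ℤ) - l := by
        have h' : (i : ℕ) < L - l := Nat.lt_of_not_le hc2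
        have h'' : ((i : ℕ) : ℤ) < ((L - l : ℕ) : ℤ) := by exact_mod_cast h'
        omega
      rcases le_or_gt s r with hs | hs
      · right
        have : s * (L : ℤ) ≤ r * L := by
          apply mul_le_mul_of_nonneg_right hs (Int.natCast_nonneg _)
        linarith
      · left
        have : r * (L : ℤ) + L ≤ s * L := by
          have : (r + 1) * (L : ℤ) ≤ s * L := by
            apply mul_le_mul_of_nonneg_right _ (Int.natCast_nonneg _)
            omega
          linarith
        linarith

/-- The boundary modification induces a surjection from the aligned L-blocks of a onto
those of a'; in particular the set of aligned L-blocks does not grow. -/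
theorem aligned_blocks_surjection (k : ℕ) (hk : 1 ≤ k) (a a' : ℤ → ℤ)
    (ha : ∀ n, a n ∈ Set.Icc (1 : ℤ) (k : ℤ))
    (l L : ℕ) (hl : 1 ≤ l) (hL : 1 ≤ L) (hdvd : l ∣ L)
    (h1 : ∀ r n : ℤ, r * (L : ℤ) - l ≤ n → n ≤ r * (L : ℤ) + l - 1 → a' n = a (n - r * L))
    (h2 : ∀ n : ℤ, (∀ r : ℤ, n < r * (L : ℤ) - l ∨ r * (L : ℤ) + l - 1 < n) → a' n = a n) :
    Nat.card (alignedBlocks a' L) ≤ Nat.card (alignedBlocks a L) ∧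
      ∃ f : alignedBlocks a L → alignedBlocks a' L, Function.Surjective f := by
  -- the map
  have hmem : ∀ w : alignedBlocks a L, modifyWord a l L w.1 ∈ alignedBlocks a' L := by
    rintro ⟨w, r, hw⟩
    exact ⟨r, modifyWord_key a a' l L hl h1 h2 r w hw⟩
  set f : alignedBlocks a L → alignedBlocks a' L := fun w => ⟨modifyWord a l L w.1, hmem w⟩
  have hsurj : Function.Surjective f := by
    rintro ⟨w', r, hw'⟩
    refine ⟨⟨fun i => a (r * (L : ℤ) + ((i : ℕ) : ℤ)), r, fun i => rfl⟩, ?_⟩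
    apply Subtype.ext
    funext i
    have := modifyWord_key a a' l L hl h1 h2 r
      (fun i => a (r * (L : ℤ) + ((i : ℕ) : ℤ))) (fun i => rfl) i
    simp only [f, this, hw' i]
  -- finiteness of the domain
  have hfin : (alignedBlocks a L).Finite := by
    apply Set.Finite.subset (Set.Finite.pi (fun _ : Fin L => Set.finite_Icc (1 : ℤ) (k : ℤ)))
    rintro w ⟨r, hw⟩ i _
    rw [hw i]
    exact ha _
  have : Finite (alignedBlocks a L) := hfin.to_subtype
  exact ⟨Nat.card_le_card_of_surjective f hsurj, f, hsurj⟩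
end
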